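/- A finite chordal graph that is not a complete graph has at least two non-adjacent simplicial vertices. -/

import Mathlib

open SimpleGraph

variable {V : Type*}

/-- `S` separates `u` and `w` in `G`: every walk from `u` to `w` meets `S`. -/
def Separates (G : SimpleGraph V) (S : Set V) (u w : V) : Prop :=
  ∀ p : G.Walk u w, ∃ x ∈ p.support, x ∈ S

/-- `S` is a minimal `{u,w}`-separator. -/
def IsMinUWSeparator (G : SimpleGraph V) (S : Set V) (u w : V) : Prop :=
  u ≠ w ∧ ¬ G.Adj u w ∧ u ∉ S ∧ w ∉ S ∧ Separates G S u w ∧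
    ∀ S' ⊂ S, ¬ Separates G S' u w

/-- `S` is a minimal separator of `G`. -/
def IsMinSeparator (G : SimpleGraph V) (S : Set V) : Prop :=
  ∃ u w : V, IsMinUWSeparator G S u w

/-- A vertex is simplicial if its neighborhood is a clique. -/
def IsSimplicial (G : SimpleGraph V) (v : V) : Prop :=
  G.IsClique (G.neighborSet v)

/-- A maximal clique (as a vertex set). -/
def IsMaxClique (G : SimpleGraph V) (s : Set V) : Prop :=
  G.IsClique s ∧ ∀ t : Set V, G.IsClique t → s ⊆ t → s = t

/-- A graph is chordal if it has no induced cycle of length at least 4. -/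
def Chordal (G : SimpleGraph V) : Prop :=
  ∀ n : ℕ, 4 ≤ n → IsEmpty (SimpleGraph.cycleGraph n ↪g G)

/-- The type of maximal cliques of `G`. -/
abbrev MaxCliques (G : SimpleGraph V) := {s : Set V // IsMaxClique G s}

/-- `T` is a clique tree of `G`: a tree on the maximal cliques such that for each vertex
the cliques containing it induce a connected subgraph. -/
def IsCliqueTree (G : SimpleGraph V) (T : SimpleGraph (MaxCliques G)) : Prop :=
  T.IsTree ∧ ∀ v : V, (T.induce {Q : MaxCliques G | v ∈ Q.1}).Connected

/-- The set `X` induces a path in `T` (assuming `T` is a tree: connected with max degree 2). -/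
def InducesPath {α : Type*} (T : SimpleGraph α) (X : Set α) : Prop :=
  (T.induce X).Connected ∧ ∀ x : X, ((T.induce X).neighborSet x).ncard ≤ 2

/-- `T` is a clique path tree of `G`. -/
def IsCliquePathTree (G : SimpleGraph V) (T : SimpleGraph (MaxCliques G)) : Prop :=
  T.IsTree ∧ ∀ v : V, InducesPath T {Q : MaxCliques G | v ∈ Q.1}

/-- `G` is a path graph: the empty graph, or a graph admitting a clique path tree. -/
def IsPathGraph (G : SimpleGraph V) : Prop :=
  IsEmpty V ∨ ∃ T : SimpleGraph (MaxCliques G), IsCliquePathTree G T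

/-- `G` is an interval graph: intersection graph of closed real intervals. -/
def IsIntervalGraph (G : SimpleGraph V) : Prop :=
  ∃ f : V → Set ℝ, (∀ v, ∃ a b : ℝ, a ≤ b ∧ f v = Set.Icc a b) ∧
    ∀ u v : V, u ≠ v → (G.Adj u v ↔ (f u ∩ f v).Nonempty)

/-- `a` is a middle of `b, c`: every walk from `b` to `c` meets `N(a)`. -/
def IsMiddle (G : SimpleGraph V) (a b c : V) : Prop :=
  ∀ p : G.Walk b c, ∃ x ∈ p.support, G.Adj a x

/-- `a, b, c` form an asteroidal triple. -/
def AsteroidalTriple (G : SimpleGraph V) (a b c : V) : Prop :=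
  a ≠ b ∧ a ≠ c ∧ b ≠ c ∧ ¬ G.Adj a b ∧ ¬ G.Adj a c ∧ ¬ G.Adj b c ∧
  (∃ p : G.Walk b c, ∀ x ∈ p.support, ¬ G.Adj a x) ∧
  (∃ p : G.Walk a c, ∀ x ∈ p.support, ¬ G.Adj b x) ∧
  (∃ p : G.Walk a b, ∀ x ∈ p.support, ¬ G.Adj c x)

/-- The closed neighborhood clique `Q_v` of a simplicial vertex. -/
def Qv (G : SimpleGraph V) (v : V) : Set V := insert v (G.neighborSet v)

/-- `S_v`: the vertices of `Q_v` having a neighbor outside `Q_v`. -/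
def Sv (G : SimpleGraph V) (v : V) : Set V :=
  {x | x ∈ Qv G v ∧ ∃ y, y ∉ Qv G v ∧ G.Adj x y}

/-- A simplicial vertex is special if `S_v` is an inclusion-maximal minimal separator. -/
def IsSpecial (G : SimpleGraph V) (v : V) : Prop :=
  IsSimplicial G v ∧ IsMinSeparator G (Sv G v) ∧
    ∀ S : Set V, IsMinSeparator G S → Sv G v ⊆ S → S = Sv G v

/-- Connected components of `G ∖ S` containing a vertex complete to `S`. -/
def CompleteComponents (G : SimpleGraph V) (S : Set V) :
    Set ((G.induce (Sᶜ : Set V)).ConnectedComponent) :=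
  {C | ∃ x : (Sᶜ : Set V), (G.induce (Sᶜ : Set V)).connectedComponentMk x = C ∧
        S ⊆ G.neighborSet x.1}

/-- The wheel graph: an `n`-cycle plus a universal vertex (`none`). -/
def wheelGraph (n : ℕ) : SimpleGraph (Option (Fin n)) :=
  SimpleGraph.fromRel (fun a b =>
    (∃ i j : Fin n, a = some i ∧ b = some j ∧ (SimpleGraph.cycleGraph n).Adj i j) ∨
    (a = none ∧ b ≠ none))

/-- `y` lies on the tree-path between `x` and `z` in `T`. -/
def OnTreePath {α : Type*} (T : SimpleGraph α) (x y z : α) : Prop :=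
  ∃ p : T.Walk x z, p.IsPath ∧ y ∈ p.support

/-!
Induction on the number of vertices. For non-adjacent `u` and `w` take a minimal `u`-`w`
separator `S`. In a chordal graph `S` is a clique: two non-adjacent `x, y ∈ S` would be joined by
chordless paths through the components of `u` and of `w` in `G - S`, and these two paths close up
to an induced cycle of length at least four. If `C` is the component of `u`, the graph induced on
`C ∪ S` is complete or, by induction, has two non-adjacent simplicial vertices; as `S` is a clique,
either way some vertex of `C` is simplicial there, hence in `G`, since its neighbours all lie in
`C ∪ S`. The same on the side of `w` gives a second simplicial vertex, non-adjacent to the first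
because `S` separates them.
-/

namespace SimpleGraph

variable {G : SimpleGraph V}

theorem cycleGraph_adj_iff_of_val_lt {n : ℕ} {i j : Fin n} (hij : i.val < j.val) :
    (cycleGraph n).Adj i j ↔ j.val = i.val + 1 ∨ (i.val = 0 ∧ j.val + 1 = n) := by
  rw [cycleGraph_adj', Fin.sub_val_of_le (Fin.le_iff_val_le_val.mpr hij.le),
    Fin.coe_sub_iff_lt.mpr hij]
  omega

theorem nonempty_cycleGraph_embedding_of {n : ℕ} (f : ℕ → V)
    (hf : ∀ i j, i < j → j < n →
      f i ≠ f j ∧ (G.Adj (f i) (f j) ↔ j = i + 1 ∨ (i = 0 ∧ j + 1 = n))) :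
    Nonempty (cycleGraph n ↪g G) := by
  refine ⟨⟨⟨fun i => f i.val, fun i j hij => ?_⟩, fun {i j} => ?_⟩⟩
  · rcases lt_trichotomy i.val j.val with h | h | h
    · exact absurd hij (hf _ _ h j.isLt).1
    · exact Fin.ext h
    · exact absurd hij.symm (hf _ _ h i.isLt).1
  · rcases lt_trichotomy i.val j.val with h | h | h
    · rw [cycleGraph_adj_iff_of_val_lt h]
      exact (hf _ _ h j.isLt).2
    · simp [Fin.ext h]
    · rw [G.adj_comm, (cycleGraph n).adj_comm, cycleGraph_adj_iff_of_val_lt h]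
      exact (hf _ _ h i.isLt).2

namespace Walk

variable {u v : V}

theorem IsPath.getVert_ne {p : G.Walk u v} (hp : p.IsPath) {i j : ℕ} (hij : i < j)
    (hj : j ≤ p.length) : p.getVert i ≠ p.getVert j :=
  fun h => hij.ne (hp.getVert_injOn (show _ ≤ p.length by omega) hj h)

theorem IsPath.adj_getVert_iff_of_isChordless {p : G.Walk u v} (hp : p.IsPath)
    (hc : p.IsChordless) {i j : ℕ} (hij : i < j) (hj : j ≤ p.length) :
    G.Adj (p.getVert i) (p.getVert j) ↔ j = i + 1 := by
  refine ⟨fun h => ?_, fun h => h ▸ p.adj_getVert_succ (by omega)⟩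
  obtain ⟨k, hk, hkij⟩ := p.mk_mem_edges_iff_exists.mp
    (hc.mem_edges (p.getVert_mem_support i) (p.getVert_mem_support j) h)
  have hinj := hp.getVert_injOn
  rcases Sym2.eq_iff.mp hkij with ⟨h1, h2⟩ | ⟨h1, h2⟩
  · have := hinj (show _ ≤ p.length by omega) (show _ ≤ p.length by omega) h1
    have := hinj (show _ ≤ p.length by omega) hj h2
    omega
  · have := hinj (show _ ≤ p.length by omega) hj h1
    have := hinj (show _ ≤ p.length by omega) (show _ ≤ p.length by omega) h2
    omega

theorem exists_isPath_isChordless {X : Set V} (p : G.Walk u v) (hp : ∀ z ∈ p.support, z ∈ X) :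
    ∃ q : G.Walk u v, q.IsPath ∧ q.IsChordless ∧ ∀ z ∈ q.support, z ∈ X := by
  classical
  have hex : ∃ n, ∃ q : G.Walk u v, q.IsPath ∧ (∀ z ∈ q.support, z ∈ X) ∧ q.length = n :=
    ⟨_, p.bypass, p.bypass_isPath, fun z hz => hp z (p.support_bypass_subset_support hz), rfl⟩
  obtain ⟨q, hq, hqX, hlen⟩ := Nat.find_spec hex
  -- a chord between `q_i` and `q_j` gives a shorter walk inside `X`, whose bypass beats `q`
  have hshort : ∀ i j, i + 1 < j → j ≤ q.length → ¬ G.Adj (q.getVert i) (q.getVert j) := by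
    intro i j hij hj hadj
    let r := (q.take i).append (cons hadj (q.drop j))
    have hrX : ∀ z ∈ r.support, z ∈ X := by
      intro z hz
      simp only [r, support_append, support_cons, support_take, drop_support_eq_support_drop_min,
        List.tail_cons, List.mem_append] at hz
      rcases hz with hz | hz
      · exact hqX z (List.mem_of_mem_take hz)
      · exact hqX z (List.mem_of_mem_drop hz)
    have hrlen : r.length < q.length := by
      simp only [r, length_append, length_cons, take_length, drop_length]
      omega
    have := r.length_bypass_le_length
    exact Nat.find_min hex (m := r.bypass.length) (by omega) ⟨r.bypass, r.bypass_isPath,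
      fun z hz => hrX z (r.support_bypass_subset_support hz), rfl⟩
  refine ⟨q, hq, isChordless_iff_forall_mem_edges.mpr fun a b ha hb hab => ?_, hqX⟩
  obtain ⟨i, rfl, hi⟩ := mem_support_iff_exists_getVert.mp ha
  obtain ⟨j, rfl, hj⟩ := mem_support_iff_exists_getVert.mp hb
  rw [mk_mem_edges_iff_exists]
  rcases lt_trichotomy i j with h | rfl | h
  · exact ⟨i, by omega, by rw [show j = i + 1 by by_contra; exact hshort i j (by omega) hj hab]⟩
  · exact absurd hab G.irrefl
  · exact ⟨j, by omega, by rw [Sym2.eq_swap, show i = j + 1 by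
      by_contra; exact hshort j i (by omega) hi hab.symm]⟩

end Walk

end SimpleGraph

section

variable {G : SimpleGraph V}

theorem Chordal.adj_of_isChordless_paths (hG : Chordal G) {x y : V} (hxy : x ≠ y)
    {p q : G.Walk x y} (hp : p.IsPath) (hpc : p.IsChordless) (hq : q.IsPath)
    (hqc : q.IsChordless)
    (hpq : ∀ i j, 0 < i → i < p.length → 0 < j → j < q.length →
      p.getVert i ≠ q.getVert j ∧ ¬ G.Adj (p.getVert i) (q.getVert j)) :
    G.Adj x y := by
  by_contra hnadj
  have two_le {r : G.Walk x y} : 2 ≤ r.length := by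
    by_contra! h
    interval_cases hr : r.length
    · exact hxy (r.eq_of_length_eq_zero hr)
    · exact hnadj (r.adj_of_length_eq_one hr)
  set N := p.length
  set M := q.length
  have hN : 2 ≤ N := two_le
  have hM : 2 ≤ M := two_le
  have hp_pair : ∀ i j, i < j → j ≤ N →
      p.getVert i ≠ p.getVert j ∧ (G.Adj (p.getVert i) (p.getVert j) ↔ j = i + 1) :=
    fun i j hij hj => ⟨hp.getVert_ne hij hj, hp.adj_getVert_iff_of_isChordless hpc hij hj⟩
  have hq_pair : ∀ i j, i < j → j ≤ M →
      q.getVert i ≠ q.getVert j ∧ (G.Adj (q.getVert i) (q.getVert j) ↔ j = i + 1) :=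
    fun i j hij hj => ⟨hq.getVert_ne hij hj, hq.adj_getVert_iff_of_isChordless hqc hij hj⟩
  let f : ℕ → V := fun t => if t ≤ N then p.getVert t else q.getVert (N + M - t)
  have hfp : ∀ t ≤ N, f t = p.getVert t := fun t ht => if_pos ht
  have hfq : ∀ t, N ≤ t → f t = q.getVert (N + M - t) := by
    intro t ht
    rcases ht.eq_or_lt with rfl | ht
    · simp [f, N, M]
    · exact if_neg (by omega)
  refine (hG (N + M) (by omega)).false
    (nonempty_cycleGraph_embedding_of f fun i j hij hj => ?_).some
  rcases le_or_gt j N with hjN | hNj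
  · obtain ⟨hne, hadj⟩ := hp_pair i j hij hjN
    rw [hfp i (by omega), hfp j hjN]
    exact ⟨hne, hadj.trans (by omega)⟩
  rw [hfq j hNj.le]
  rcases le_or_gt N i with hNi | hiN
  · obtain ⟨hne, hadj⟩ := hq_pair (N + M - j) (N + M - i) (by omega) (by omega)
    rw [hfq i hNi]
    exact ⟨hne.symm, G.adj_comm _ _ |>.trans (hadj.trans (by omega))⟩
  rcases Nat.eq_zero_or_pos i with rfl | hi
  · obtain ⟨hne, hadj⟩ := hq_pair 0 (N + M - j) (by omega) (by omega)
    rw [q.getVert_zero] at hne hadj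
    rw [hfp 0 (by omega), p.getVert_zero]
    exact ⟨hne, hadj.trans (by omega)⟩
  · obtain ⟨hne, hadj⟩ := hpq i (N + M - j) hi hiN (by omega) (by omega)
    rw [hfp i hiN.le]
    exact ⟨hne, iff_of_false hadj (by omega)⟩

def componentAvoiding (G : SimpleGraph V) (S : Set V) (u : V) : Set V :=
  {z | ∃ p : G.Walk u z, ∀ x ∈ p.support, x ∉ S}

section componentAvoiding

variable {S : Set V} {u w z z' : V}

theorem mem_componentAvoiding_self (hu : u ∉ S) : u ∈ componentAvoiding G S u :=
  ⟨Walk.nil, by simpa⟩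

theorem notMem_of_mem_componentAvoiding (hz : z ∈ componentAvoiding G S u) : z ∉ S :=
  hz.elim fun p hp => hp z p.end_mem_support

theorem mem_componentAvoiding_of_adj (hz : z ∈ componentAvoiding G S u) (h : G.Adj z z')
    (hz' : z' ∉ S) : z' ∈ componentAvoiding G S u := by
  obtain ⟨p, hp⟩ := hz
  refine ⟨p.concat h, fun x hx => ?_⟩
  rw [Walk.support_concat, List.mem_append, List.mem_singleton] at hx
  exact hx.elim (hp x) (· ▸ hz')

theorem mem_componentAvoiding_of_adj_left (hu : u ∉ S) (h : G.Adj u z)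
    (hz' : z' ∈ componentAvoiding G S z) : z' ∈ componentAvoiding G S u := by
  obtain ⟨p, hp⟩ := hz'
  refine ⟨p.cons h, fun x hx => ?_⟩
  rw [Walk.support_cons, List.mem_cons] at hx
  exact hx.elim (· ▸ hu) (hp x)

theorem SimpleGraph.Walk.support_subset_componentAvoiding (p : G.Walk u z)
    (hp : ∀ x ∈ p.support, x ∉ S) : ∀ x ∈ p.support, x ∈ componentAvoiding G S u := by
  classical
  exact fun x hx =>
    ⟨p.takeUntil x hx, fun y hy => hp y (p.support_takeUntil_subset_support hx hy)⟩

theorem exists_walk_of_mem_componentAvoiding (hz : z ∈ componentAvoiding G S u)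
    (hz' : z' ∈ componentAvoiding G S u) :
    ∃ r : G.Walk z z', ∀ x ∈ r.support, x ∈ componentAvoiding G S u := by
  obtain ⟨p, hp⟩ := hz
  obtain ⟨q, hq⟩ := hz'
  refine ⟨p.reverse.append q, fun x hx => ?_⟩
  rw [Walk.mem_support_append_iff, Walk.support_reverse, List.mem_reverse] at hx
  exact hx.elim (p.support_subset_componentAvoiding hp x)
    (q.support_subset_componentAvoiding hq x)

theorem Separates.ne_and_not_adj (hsep : Separates G S u w) {a b : V}
    (ha : a ∈ componentAvoiding G S u) (hb : b ∈ componentAvoiding G S w) :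
    a ≠ b ∧ ¬ G.Adj a b := by
  have hdisj : ∀ c ∈ componentAvoiding G S u, c ∉ componentAvoiding G S w := by
    rintro c ⟨p, hp⟩ ⟨q, hq⟩
    obtain ⟨x, hx, hxS⟩ := hsep (p.append q.reverse)
    rw [Walk.mem_support_append_iff, Walk.support_reverse, List.mem_reverse] at hx
    exact hx.elim (hp x · hxS) (hq x · hxS)
  exact ⟨fun hab => hdisj a ha (hab ▸ hb), fun hab => hdisj b
    (mem_componentAvoiding_of_adj ha hab (notMem_of_mem_componentAvoiding hb)) hb⟩

theorem SimpleGraph.Walk.exists_adj_mem_componentAvoiding {v : V} (p : G.Walk u v)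
    (hu : u ∉ S) (hp : ∃ s ∈ p.support, s ∈ S) :
    ∃ s ∈ p.support, s ∈ S ∧ ∃ a ∈ componentAvoiding G S u, G.Adj a s := by
  induction p with
  | nil => exact absurd (by simpa using hp) hu
  | @cons u z v h p ih =>
    by_cases hz : z ∈ S
    · exact ⟨z, by simp, hz, u, mem_componentAvoiding_self hu, h⟩
    obtain ⟨s, hs, hsS, a, ha, has⟩ := ih hz (by simpa [hu] using hp)
    exact ⟨s, by simp [hs], hsS, a, mem_componentAvoiding_of_adj_left hu h ha, has⟩

end componentAvoiding

section separator

variable {S : Set V} {u w : V}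

theorem Separates.symm (h : Separates G S u w) : Separates G S w u := fun p => by
  simpa using h p.reverse

theorem IsMinUWSeparator.symm (h : IsMinUWSeparator G S u w) : IsMinUWSeparator G S w u :=
  let ⟨hne, hnadj, huS, hwS, hsep, hmin⟩ := h
  ⟨hne.symm, fun h => hnadj h.symm, hwS, huS, hsep.symm, fun S' hS' h => hmin S' hS' h.symm⟩

theorem exists_isMinUWSeparator [Finite V] (hne : u ≠ w) (hnadj : ¬ G.Adj u w) :
    ∃ S : Set V, IsMinUWSeparator G S u w := by
  let P : Set V → Prop := fun S => u ∉ S ∧ w ∉ S ∧ Separates G S u w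
  have hP : P {z | z ≠ u ∧ z ≠ w} := by
    refine ⟨by simp, by simp, fun p => ?_⟩
    have hadj := p.adj_snd (Walk.not_nil_of_ne hne)
    exact ⟨p.snd, p.getVert_mem_support 1, hadj.ne', fun h => hnadj (h ▸ hadj)⟩
  obtain ⟨S, -, ⟨huS, hwS, hsep⟩, hmin⟩ := exists_minimal_le_of_wellFoundedLT P _ hP
  exact ⟨S, hne, hnadj, huS, hwS, hsep, fun S' hS' hsep' =>
    hS'.2 (hmin ⟨fun h => huS (hS'.1 h), fun h => hwS (hS'.1 h), hsep'⟩ hS'.1)⟩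

theorem IsMinUWSeparator.exists_adj_mem_componentAvoiding (hS : IsMinUWSeparator G S u w)
    {s : V} (hs : s ∈ S) : ∃ a ∈ componentAvoiding G S u, G.Adj a s := by
  obtain ⟨-, -, huS, -, hsep, hmin⟩ := hS
  have : ¬ Separates G (S \ {s}) u w := hmin _ (Set.sdiff_singleton_ssubset.mpr hs)
  obtain ⟨p, hp⟩ : ∃ p : G.Walk u w, ∀ x ∈ p.support, x ∉ S \ {s} := by
    simpa [Separates] using this
  obtain ⟨s', hs'p, hs'S, a, ha, has'⟩ := p.exists_adj_mem_componentAvoiding huS (hsep p)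
  obtain rfl : s' = s := by simpa [hs'S] using hp s' hs'p
  exact ⟨a, ha, has'⟩

theorem IsMinUWSeparator.exists_isPath_isChordless (hS : IsMinUWSeparator G S u w) {x y : V}
    (hx : x ∈ S) (hy : y ∈ S) :
    ∃ p : G.Walk x y, p.IsPath ∧ p.IsChordless ∧
      ∀ i, 0 < i → i < p.length → p.getVert i ∈ componentAvoiding G S u := by
  obtain ⟨a, ha, hax⟩ := hS.exists_adj_mem_componentAvoiding hx
  obtain ⟨b, hb, hby⟩ := hS.exists_adj_mem_componentAvoiding hy
  obtain ⟨r, hr⟩ := exists_walk_of_mem_componentAvoiding ha hb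
  obtain ⟨p, hp, hpc, hpX⟩ := ((r.cons hax.symm).concat hby).exists_isPath_isChordless
    (X := insert x (insert y (componentAvoiding G S u))) fun z hz => by
      simp only [Walk.support_concat, Walk.support_cons, List.mem_append, List.mem_cons,
        List.not_mem_nil, or_false] at hz
      rcases hz with (rfl | hz) | rfl
      exacts [.inl rfl, .inr (.inr (hr z hz)), .inr (.inl rfl)]
  refine ⟨p, hp, hpc, fun i hi hil => ?_⟩
  rcases hpX _ (p.getVert_mem_support i) with h | h | h
  · exact absurd ((hp.getVert_eq_start_iff hil.le).mp h) hi.ne'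
  · exact absurd ((hp.getVert_eq_end_iff hil.le).mp h) hil.ne
  · exact h

theorem IsMinUWSeparator.isClique (hG : Chordal G) (hS : IsMinUWSeparator G S u w) :
    G.IsClique S := by
  intro x hx y hy hxy
  obtain ⟨p, hp, hpc, hpu⟩ := hS.exists_isPath_isChordless hx hy
  obtain ⟨q, hq, hqc, hqw⟩ := hS.symm.exists_isPath_isChordless hx hy
  obtain ⟨-, -, -, -, hsep, -⟩ := hS
  exact hG.adj_of_isChordless_paths hxy hp hpc hq hqc fun i j hi hip hj hjq =>
    hsep.ne_and_not_adj (hpu i hi hip) (hqw j hj hjq)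

end separator

theorem Chordal.induce (hG : Chordal G) (D : Set V) : Chordal (G.induce D) :=
  fun n hn => ⟨fun e => (hG n hn).false ((Embedding.induce D).comp e)⟩

theorem IsSimplicial.of_induce {D : Set V} {v : V} (hv : v ∈ D) (hvD : G.neighborSet v ⊆ D)
    (hs : IsSimplicial (G.induce D) ⟨v, hv⟩) : IsSimplicial G v :=
  fun a ha b hb hab => hs (x := ⟨a, hvD ha⟩) (y := ⟨b, hvD hb⟩) ha hb (by simpa using hab)

theorem exists_isSimplicial_mem_componentAvoiding {S : Set V} {u : V} (hu : u ∉ S)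
    (hS : G.IsClique S)
    (hD : G.induce (componentAvoiding G S u ∪ S) = ⊤ ∨
      ∃ v v' : ↥(componentAvoiding G S u ∪ S), v ≠ v' ∧
        ¬ (G.induce (componentAvoiding G S u ∪ S)).Adj v v' ∧
        IsSimplicial (G.induce (componentAvoiding G S u ∪ S)) v ∧
        IsSimplicial (G.induce (componentAvoiding G S u ∪ S)) v') :
    ∃ v ∈ componentAvoiding G S u, IsSimplicial G v := by
  set C := componentAvoiding G S u
  have hC : ∀ v ∈ C, G.neighborSet v ⊆ C ∪ S := fun v hv z hz => by
    by_cases hzS : z ∈ S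
    exacts [.inr hzS, .inl (mem_componentAvoiding_of_adj hv hz hzS)]
  suffices ∃ v : ↥(C ∪ S), v.1 ∈ C ∧ IsSimplicial (G.induce (C ∪ S)) v by
    obtain ⟨⟨v, hv⟩, hvC, hvs⟩ := this
    exact ⟨v, hvC, hvs.of_induce hv (hC v hvC)⟩
  rcases hD with hcomplete | ⟨v, v', hne, hnadj, hv, hv'⟩
  · refine ⟨⟨u, .inl (mem_componentAvoiding_self hu)⟩, mem_componentAvoiding_self hu, ?_⟩
    rw [IsSimplicial, hcomplete]
    exact fun a _ b _ hab => hab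
  -- `S` is a clique, so one of the two non-adjacent vertices lies in `C`
  by_cases hvS : v.1 ∈ S
  · refine ⟨v', v'.2.resolve_right fun hv'S => hnadj ?_, hv'⟩
    exact hS hvS hv'S (Subtype.val_injective.ne hne)
  · exact ⟨v, v.2.resolve_right hvS, hv⟩

end

theorem stmt4 [Fintype V] (G : SimpleGraph V) (hG : Chordal G)
    (hnc : ∃ u w : V, u ≠ w ∧ ¬ G.Adj u w) :
    ∃ v w : V, v ≠ w ∧ ¬ G.Adj v w ∧ IsSimplicial G v ∧ IsSimplicial G w := by
  classical
  induction hn : Fintype.card V using Nat.strong_induction_on generalizing V with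
  | _ n ih =>
  obtain ⟨u, w, hne, hnadj⟩ := hnc
  obtain ⟨S, hS⟩ := exists_isMinUWSeparator hne hnadj
  have hSc := hS.isClique hG
  have side {a b : V} (hab : IsMinUWSeparator G S a b) :
      ∃ v ∈ componentAvoiding G S a, IsSimplicial G v := by
    obtain ⟨-, -, haS, hbS, hsep, -⟩ := hab
    refine exists_isSimplicial_mem_componentAvoiding haS hSc
      (or_iff_not_imp_left.mpr fun htop => ?_)
    have hbD : b ∉ componentAvoiding G S a ∪ S := by
      rintro (hb | hb)
      exacts [(hsep.ne_and_not_adj hb (mem_componentAvoiding_self hbS)).1 rfl, hbS hb]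
    exact ih _ (hn ▸ Fintype.card_subtype_lt hbD) _ (hG.induce _)
      (ne_top_iff_exists_not_adj.mp htop) rfl
  obtain ⟨v, hv, hvs⟩ := side hS
  obtain ⟨v', hv', hv's⟩ := side hS.symm
  obtain ⟨-, -, -, -, hsep, -⟩ := hS
  obtain ⟨hne', hnadj'⟩ := hsep.ne_and_not_adj hv hv'
  exact ⟨v, v', hne', hnadj', hvs, hv's⟩
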